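/- arXiv:2004.08946 — 4 statements merged into one kernel-verified Lean document; each statement's English description precedes it below -/
import Mathlib

section
/- Let c, τ ∈ ℝ and T > 0. Suppose θ : [0,T] → ℝ is continuous on [0,T], differentiable on (0,T], and satisfies θ'(t) + θ(t)² − c ≤ 0 for all t ∈ (0,T] and θ(0) ≤ τ. Then for every t ∈ (0,T] one has cn_c(t) + τ·sn_c(t) > 0 and θ(t) ≤ (τ·cn_c(t) + c·sn_c(t)) / (cn_c(t) + τ·sn_c(t)). -/
open Set intervalIntegral

/-- **Riccati comparison inequality** (Proposition 2.3 of the paper).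
`sn` and `cn` encode the Jacobi functions `sn_c`, `cn_c : ℝ → ℝ`, where `sn_c`
is the unique solution of `sn_c'' = c · sn_c`, `sn_c 0 = 0`, `sn_c' 0 = 1`,
and `cn_c := sn_c'`. If `θ` is continuous on `[0,T]`, differentiable on `(0,T]`
with `θ' + θ² − c ≤ 0` there, and `θ 0 ≤ τ`, then for every `t ∈ (0,T]` one has
`cn_c t + τ·sn_c t > 0` and `θ t ≤ (τ·cn_c t + c·sn_c t)/(cn_c t + τ·sn_c t)`. -/
theorem riccati_comparison (c τ T : ℝ) (hT : 0 < T)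
    (sn cn : ℝ → ℝ)
    (hsn0 : sn 0 = 0) (hcn0 : cn 0 = 1)
    (hsn : ∀ t : ℝ, HasDerivAt sn (cn t) t)
    (hcn : ∀ t : ℝ, HasDerivAt cn (c * sn t) t)
    (θ θ' : ℝ → ℝ)
    (hθcont : ContinuousOn θ (Set.Icc 0 T))
    (hθdiff : ∀ t ∈ Set.Ioc 0 T, HasDerivWithinAt θ (θ' t) (Set.Ioc 0 T) t)
    (hric : ∀ t ∈ Set.Ioc 0 T, θ' t + θ t ^ 2 - c ≤ 0)
    (hθ0 : θ 0 ≤ τ) :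
    ∀ t ∈ Set.Ioc 0 T,
      0 < cn t + τ * sn t ∧
        θ t ≤ (τ * cn t + c * sn t) / (cn t + τ * sn t) := by
  -- G = cn + τ sn, G' = c sn + τ cn
  set G : ℝ → ℝ := fun t => cn t + τ * sn t with hGdef
  set G' : ℝ → ℝ := fun t => c * sn t + τ * cn t with hG'def
  have hG0 : G 0 = 1 := by simp [hGdef, hsn0, hcn0]
  have hG'0 : G' 0 = τ := by simp [hG'def, hsn0, hcn0]
  have hGd : ∀ t : ℝ, HasDerivAt G (G' t) t := fun t =>
    (hcn t).add ((hsn t).const_mul τ)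
  have hG'd : ∀ t : ℝ, HasDerivAt G' (c * G t) t := by
    intro t
    have := ((hsn t).const_mul c).add ((hcn t).const_mul τ)
    refine this.congr_deriv ?_
    simp [hGdef]; ring
  have hGcont : Continuous G := by
    have := fun t => (hGd t).differentiableAt
    exact Differentiable.continuous this
  have hG'cont : Continuous G' := by
    have := fun t => (hG'd t).differentiableAt
    exact Differentiable.continuous this
  -- Wronskian: cn t * G t - sn t * G' t = 1 for all t
  have hW : ∀ t : ℝ, cn t * G t - sn t * G' t = 1 := by
    have hconst : ∀ t : ℝ, HasDerivAt (fun t => cn t * G t - sn t * G' t) 0 t := by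
      intro t
      have h1 := ((hcn t).mul (hGd t)).sub ((hsn t).mul (hG'd t))
      refine h1.congr_deriv ?_
      ring
    intro t
    have := is_const_of_deriv_eq_zero (f := fun t => cn t * G t - sn t * G' t)
      (fun x => (hconst x).differentiableAt) (fun x => (hconst x).deriv) t 0
    rw [this]
    simp [hsn0, hcn0, hG0]
  -- extend θ continuously to ℝ via clamping
  set p : ℝ → ℝ := fun t => max 0 (min t T) with hpdef
  have hpmem : ∀ t, p t ∈ Icc 0 T := fun t =>
    ⟨le_max_left _ _, max_le hT.le (min_le_right _ _)⟩
  have hpid : ∀ t ∈ Icc 0 T, p t = t := by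
    intro t ht
    simp [hpdef, min_eq_left ht.2, max_eq_right ht.1]
  set θext : ℝ → ℝ := fun t => θ (p t) with hθtdef
  have hθtcont : Continuous θext := by
    apply hθcont.comp_continuous
    · exact continuous_const.max (continuous_id.min continuous_const)
    · exact hpmem
  have hθteq : ∀ t ∈ Icc 0 T, θext t = θ t := fun t ht => by
    simp [hθtdef, hpid t ht]
  -- F = exp of primitive of θext
  set F : ℝ → ℝ := fun t => Real.exp (∫ s in (0:ℝ)..t, θext s) with hFdef
  have hFd : ∀ t : ℝ, HasDerivAt F (θext t * F t) t := by
    intro t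
    have hint : HasDerivAt (fun u => ∫ s in (0:ℝ)..u, θext s) (θext t) t :=
      integral_hasDerivAt_right (hθtcont.intervalIntegrable 0 t)
        (hθtcont.stronglyMeasurableAtFilter _ _) hθtcont.continuousAt
    simpa [hFdef, mul_comm] using hint.exp
  have hF0 : F 0 = 1 := by simp [hFdef]
  have hFpos : ∀ t, 0 < F t := fun t => Real.exp_pos _
  have hFcont : Continuous F :=
    Differentiable.continuous fun t => (hFd t).differentiableAt
  -- W t = F t * (θ t * G t - G' t)
  set W : ℝ → ℝ := fun t => F t * (θ t * G t - G' t) with hWdef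
  have hWcont : ContinuousOn W (Icc 0 T) :=
    (hFcont.continuousOn.mul
      ((hθcont.mul hGcont.continuousOn).sub hG'cont.continuousOn))
  have hW0 : W 0 = θ 0 - τ := by simp [hWdef, hF0, hG0, hG'0]
  -- derivative of W within Ioc 0 T
  have hWd : ∀ t ∈ Ioc 0 T, HasDerivWithinAt W
      (F t * G t * (θ' t + θ t ^ 2 - c)) (Ioc 0 T) t := by
    intro t ht
    have hFt : HasDerivWithinAt F (θ t * F t) (Ioc 0 T) t := by
      have := (hFd t).hasDerivWithinAt (s := Ioc 0 T)
      rwa [hθteq t (Ioc_subset_Icc_self ht)] at this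
    have h1 := hFt.mul (((hθdiff t ht).mul
      ((hGd t).hasDerivWithinAt)).sub ((hG'd t).hasDerivWithinAt))
    refine h1.congr_deriv ?_
    simp only [Pi.sub_apply, Pi.mul_apply]
    ring
  -- key monotonicity: if G ≥ 0 on [0,b] (b ≤ T), then W b ≤ W 0
  have key : ∀ b ∈ Ioc 0 T, (∀ s ∈ Icc 0 b, 0 ≤ G s) → W b ≤ W 0 := by
    intro b hb hGnn
    have hsub : Ioo (0:ℝ) b ⊆ Ioc 0 T := fun x hx => ⟨hx.1, hx.2.le.trans hb.2⟩
    have hanti : AntitoneOn W (Icc 0 b) := by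
      apply antitoneOn_of_hasDerivWithinAt_nonpos (f' := fun t =>
        F t * G t * (θ' t + θ t ^ 2 - c)) (convex_Icc 0 b)
        (hWcont.mono (Icc_subset_Icc le_rfl hb.2))
      · intro x hx
        rw [interior_Icc] at hx ⊢
        exact (hWd x (hsub hx)).mono hsub
      · intro x hx
        rw [interior_Icc] at hx
        have hGx : 0 ≤ G x := hGnn x ⟨hx.1.le, hx.2.le⟩
        have := hric x (hsub hx)
        have hFx := (hFpos x).le
        exact mul_nonpos_of_nonneg_of_nonpos (mul_nonneg hFx hGx) this
    exact hanti (left_mem_Icc.2 hb.1.le) (right_mem_Icc.2 hb.1.le) hb.1.le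
  -- positivity of G on [0, T]
  have hGpos : ∀ t ∈ Icc 0 T, 0 < G t := by
    by_contra hcontra
    push_neg at hcontra
    obtain ⟨t₁, ht₁, hGt₁⟩ := hcontra
    -- set of zeros
    set S : Set ℝ := Icc 0 T ∩ G ⁻¹' (Iic 0) with hSdef
    have hSne : S.Nonempty := ⟨t₁, ht₁, hGt₁⟩
    have hSclosed : IsClosed S := isClosed_Icc.inter (isClosed_Iic.preimage hGcont)
    have hSbdd : BddBelow S := ⟨0, fun x hx => hx.1.1⟩
    set t₀ : ℝ := sInf S with ht₀def
    have ht₀S : t₀ ∈ S := hSclosed.csInf_mem hSne hSbdd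
    have ht₀pos : 0 < t₀ := by
      rcases lt_or_eq_of_le ht₀S.1.1 with h | h
      · exact h
      · exfalso
        have : G t₀ ≤ 0 := show G t₀ ≤ 0 from ht₀S.2
        rw [← h, hG0] at this
        linarith
    have hbefore : ∀ s ∈ Ico 0 t₀, 0 < G s := by
      intro s hs
      by_contra hGs
      push_neg at hGs
      have hsS : s ∈ S := ⟨⟨hs.1, hs.2.le.trans ht₀S.1.2⟩, hGs⟩
      exact absurd (csInf_le hSbdd hsS) (not_le.2 hs.2)
    have hGt₀ : G t₀ = 0 := by
      rcases lt_or_eq_of_le (show G t₀ ≤ 0 from ht₀S.2) with h | h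
      · exfalso
        -- IVT gives a zero strictly before t₀
        have hivt : (0:ℝ) ∈ G '' Icc 0 t₀ := by
          apply intermediate_value_Icc' ht₀pos.le hGcont.continuousOn
          exact ⟨by linarith, by rw [hG0]; norm_num⟩
        obtain ⟨s, hs, hGs0⟩ := hivt
        rcases lt_or_eq_of_le hs.2 with hlt | heq
        · exact absurd hGs0 (ne_of_gt (hbefore s ⟨hs.1, hlt⟩))
        · rw [heq] at hGs0; rw [hGs0] at h; exact lt_irrefl 0 h
      · exact h
    -- W t₀ ≤ W 0 ≤ 0, so G' t₀ ≥ 0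
    have ht₀T : t₀ ∈ Ioc 0 T := ⟨ht₀pos, ht₀S.1.2⟩
    have hWt₀ : W t₀ ≤ W 0 := by
      apply key t₀ ht₀T
      intro s hs
      rcases lt_or_eq_of_le hs.2 with h | h
      · exact (hbefore s ⟨hs.1, h⟩).le
      · rw [h, hGt₀]
    have hG'nn : 0 ≤ G' t₀ := by
      have h1 : W t₀ = -(F t₀ * G' t₀) := by simp [hWdef, hGt₀]
      have h2 : W 0 ≤ 0 := by rw [hW0]; linarith
      nlinarith [hFpos t₀]
    -- slope from the left: G' t₀ ≤ 0
    have hG'np : G' t₀ ≤ 0 := by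
      have hslope : Filter.Tendsto (slope G t₀) (nhdsWithin t₀ (Iio t₀)) (nhds (G' t₀)) :=
        (hasDerivAt_iff_tendsto_slope.mp (hGd t₀)).mono_left
          (nhdsWithin_mono _ fun x hx => ne_of_lt hx)
      apply le_of_tendsto hslope
      filter_upwards [Ioo_mem_nhdsLT_of_mem (right_mem_Ioc.2 ht₀pos)] with s hs
      have hGs : 0 < G s := hbefore s ⟨hs.1.le, hs.2⟩
      have : slope G t₀ s = (G s - G t₀) / (s - t₀) := by
        rw [slope_def_field]
      rw [this, hGt₀, sub_zero]
      apply div_nonpos_of_nonneg_of_nonpos hGs.le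
      linarith [hs.2]
    have hG'z : G' t₀ = 0 := le_antisymm hG'np hG'nn
    have := hW t₀
    rw [hGt₀, hG'z] at this
    simp at this
  -- conclusion
  intro t ht
  have hGt : 0 < G t := hGpos t (Ioc_subset_Icc_self ht)
  refine ⟨hGt, ?_⟩
  have hWt : W t ≤ W 0 := by
    apply key t ht
    intro s hs
    exact (hGpos s ⟨hs.1, hs.2.trans ht.2⟩).le
  have hW0' : W 0 ≤ 0 := by rw [hW0]; linarith
  have hWt0 : W t ≤ 0 := hWt.trans hW0'
  have hnum : θ t * G t - G' t ≤ 0 := by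
    by_contra hpos
    push_neg at hpos
    have := mul_pos (hFpos t) hpos
    rw [hWdef] at hWt0
    simp only at hWt0
    linarith
  rw [le_div_iff₀ (show (0:ℝ) < cn t + τ * sn t from hGt)]
  simp only [hGdef, hG'def] at hnum
  linarith
end

section
/- Let c, τ ∈ ℝ with τ² ≥ c, and let T > 0 be such that cn_c(t) + τ·sn_c(t) > 0 for all t ∈ [0,T]. Then the function t ↦ f(τ,t) := (τ·cn_c(t) + c·sn_c(t))/(cn_c(t) + τ·sn_c(t)) is nonincreasing on [0,T]; in particular f(τ,t) ≤ τ for all t ∈ [0,T]. -/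
/-- Case (A₁) of the barrier construction: if `τ² ≥ c` and the denominator
`cn_c + τ·sn_c` is positive on `[0,T]`, then
`t ↦ f(τ,t) = (τ·cn_c t + c·sn_c t)/(cn_c t + τ·sn_c t)` is nonincreasing on
`[0,T]`; in particular `f(τ,t) ≤ τ` there.  Here `sn_c` is the unique solution
of `sn_c'' = c·sn_c`, `sn_c 0 = 0`, `sn_c' 0 = 1`, and `cn_c := sn_c'`. -/
theorem comparison_function_antitone (c τ T : ℝ) (hτ : c ≤ τ ^ 2) (hT : 0 < T)
    (sn cn : ℝ → ℝ)
    (hsn0 : sn 0 = 0) (hcn0 : cn 0 = 1)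
    (hsn : ∀ s : ℝ, HasDerivAt sn (cn s) s)
    (hcn : ∀ s : ℝ, HasDerivAt cn (c * sn s) s)
    (hden : ∀ t ∈ Set.Icc 0 T, 0 < cn t + τ * sn t) :
    AntitoneOn (fun t => (τ * cn t + c * sn t) / (cn t + τ * sn t)) (Set.Icc 0 T) ∧
    ∀ t ∈ Set.Icc 0 T, (τ * cn t + c * sn t) / (cn t + τ * sn t) ≤ τ := by
  -- Wronskian-type identity: cn² − c·sn² ≡ 1
  have key : ∀ x : ℝ, cn x ^ 2 - c * sn x ^ 2 = 1 := by
    have hg : ∀ y : ℝ, HasDerivAt (fun y => cn y ^ 2 - c * sn y ^ 2) 0 y := by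
      intro y
      have h := ((hcn y).pow 2).sub (((hsn y).pow 2).const_mul c)
      refine h.congr_deriv ?_
      ring
    intro x
    have hconst := is_const_of_deriv_eq_zero (f := fun y => cn y ^ 2 - c * sn y ^ 2)
      (fun y => (hg y).differentiableAt) (fun y => (hg y).deriv) x 0
    simpa [hsn0, hcn0] using hconst
  -- derivative of f at points where the denominator doesn't vanish
  have hderiv : ∀ t : ℝ, cn t + τ * sn t ≠ 0 →
      HasDerivAt (fun t => (τ * cn t + c * sn t) / (cn t + τ * sn t))
        ((c - τ ^ 2) / (cn t + τ * sn t) ^ 2) t := by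
    intro t ht
    have hnum : HasDerivAt (fun t => τ * cn t + c * sn t)
        (τ * (c * sn t) + c * cn t) t := ((hcn t).const_mul τ).add ((hsn t).const_mul c)
    have hd : HasDerivAt (fun t => cn t + τ * sn t) (c * sn t + τ * cn t) t :=
      (hcn t).add ((hsn t).const_mul τ)
    have h := hnum.div hd ht
    refine h.congr_deriv ?_
    have := key t
    field_simp
    ring_nf
    nlinarith [key t]
  have hcnC : Continuous cn := continuous_iff_continuousAt.2 fun s => (hcn s).continuousAt
  have hsnC : Continuous sn := continuous_iff_continuousAt.2 fun s => (hsn s).continuousAt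
  have hcont : ContinuousOn (fun t => (τ * cn t + c * sn t) / (cn t + τ * sn t))
      (Set.Icc 0 T) := by
    apply ContinuousOn.div
    · exact ((continuous_const.mul hcnC).add (continuous_const.mul hsnC)).continuousOn
    · exact (hcnC.add (continuous_const.mul hsnC)).continuousOn
    · intro x hx; exact (hden x hx).ne'
  have hanti : AntitoneOn (fun t => (τ * cn t + c * sn t) / (cn t + τ * sn t))
      (Set.Icc 0 T) := by
    apply antitoneOn_of_deriv_nonpos (convex_Icc 0 T) hcont
    · intro x hx
      rw [interior_Icc] at hx
      exact (hderiv x (hden x (Set.mem_Icc_of_Ioo hx)).ne').differentiableAt.differentiableWithinAt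
    · intro x hx
      rw [interior_Icc] at hx
      rw [(hderiv x (hden x (Set.mem_Icc_of_Ioo hx)).ne').deriv]
      apply div_nonpos_of_nonpos_of_nonneg (by linarith) (sq_nonneg _)
  refine ⟨hanti, fun t ht => ?_⟩
  have h0 : (0 : ℝ) ∈ Set.Icc (0 : ℝ) T := ⟨le_refl 0, hT.le⟩
  have := hanti h0 ht ht.1
  simpa [hsn0, hcn0] using this
end

section
/- Let c, τ ∈ ℝ and let T > 0 be such that cn_c(t) + τ·sn_c(t) > 0 for all t ∈ [0,T]. Then f(τ,t) := (τ·cn_c(t) + c·sn_c(t))/(cn_c(t) + τ·sn_c(t)) satisfies f(τ,t) ≤ max{τ, √(max{c,0})} for all t ∈ [0,T]. -/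
/-- Uniform bound for the comparison function: if the denominator
`cn_c + τ·sn_c` is positive on `[0,T]`, then
`f(τ,t) = (τ·cn_c t + c·sn_c t)/(cn_c t + τ·sn_c t) ≤ max {τ, √(max {c, 0})}`
for all `t ∈ [0,T]`.  Here `sn_c` is the unique solution of `sn_c'' = c·sn_c`,
`sn_c 0 = 0`, `sn_c' 0 = 1`, and `cn_c := sn_c'`. -/
theorem comparison_function_uniform_bound (c τ T : ℝ) (hT : 0 < T)
    (sn cn : ℝ → ℝ)
    (hsn0 : sn 0 = 0) (hcn0 : cn 0 = 1)
    (hsn : ∀ s : ℝ, HasDerivAt sn (cn s) s)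
    (hcn : ∀ s : ℝ, HasDerivAt cn (c * sn s) s)
    (hden : ∀ t ∈ Set.Icc 0 T, 0 < cn t + τ * sn t) :
    ∀ t ∈ Set.Icc 0 T,
      (τ * cn t + c * sn t) / (cn t + τ * sn t) ≤ max τ (Real.sqrt (max c 0)) := by
  set M := max τ (Real.sqrt (max c 0)) with hM
  have hMτ : τ ≤ M := le_max_left _ _
  have hM0 : 0 ≤ M := le_trans (Real.sqrt_nonneg _) (le_max_right _ _)
  have hcM : c ≤ M ^ 2 := by
    have h1 : Real.sqrt (max c 0) ≤ M := le_max_right _ _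
    have h2 : (Real.sqrt (max c 0)) ^ 2 = max c 0 := Real.sq_sqrt (le_max_right _ _)
    nlinarith [le_max_left c 0, Real.sqrt_nonneg (max c 0)]
  set v : ℝ → ℝ := fun t => Real.exp (M * t) * (τ * cn t + c * sn t - M * (cn t + τ * sn t))
    with hv
  have hv' : ∀ t : ℝ, HasDerivAt v (Real.exp (M * t) * ((c - M ^ 2) * (cn t + τ * sn t))) t := by
    intro t
    have he : HasDerivAt (fun t => Real.exp (M * t)) (M * Real.exp (M * t)) t := by
      simpa [mul_comm] using ((hasDerivAt_id t).const_mul M).exp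
    have hg : HasDerivAt (fun t => τ * cn t + c * sn t - M * (cn t + τ * sn t))
        (τ * (c * sn t) + c * cn t - M * (c * sn t + τ * cn t)) t :=
      (((hcn t).const_mul τ).add ((hsn t).const_mul c)).sub
        (((hcn t).add ((hsn t).const_mul τ)).const_mul M)
    have := he.mul hg
    exact this.congr_deriv (by ring)
  have hvdiff : Differentiable ℝ v := fun t => (hv' t).differentiableAt
  have hanti : AntitoneOn v (Set.Icc 0 T) := by
    apply antitoneOn_of_deriv_nonpos (convex_Icc 0 T) hvdiff.continuous.continuousOn
      hvdiff.differentiableOn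
    intro t ht
    rw [interior_Icc] at ht
    have hd : 0 < cn t + τ * sn t := hden t (Set.mem_Icc.mpr ⟨ht.1.le, ht.2.le⟩)
    rw [(hv' t).deriv]
    have : c - M ^ 2 ≤ 0 := by linarith
    have := mul_nonpos_of_nonpos_of_nonneg this hd.le
    exact mul_nonpos_of_nonneg_of_nonpos (Real.exp_pos _).le this
  intro t ht
  have hd : 0 < cn t + τ * sn t := hden t ht
  have h0 : (0 : ℝ) ∈ Set.Icc (0 : ℝ) T := Set.mem_Icc.mpr ⟨le_rfl, hT.le⟩
  have hvt : v t ≤ v 0 := hanti h0 ht ht.1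
  have hv0 : v 0 = τ - M := by simp [hv, hsn0, hcn0]
  have hvt0 : v t ≤ 0 := by rw [hv0] at hvt; linarith
  have hnum : τ * cn t + c * sn t - M * (cn t + τ * sn t) ≤ 0 := by
    have hexp : 0 < Real.exp (M * t) := Real.exp_pos _
    by_contra h
    push_neg at h
    have := mul_pos hexp h
    simp only [hv] at hvt0
    linarith
  rw [div_le_iff₀ hd]
  linarith
end

section
/- Let c, τ ∈ ℝ and let T > 0 be such that cn_c(t) + τ·sn_c(t) > 0 for all t ∈ [0,T]. Then f(τ,t) := (τ·cn_c(t) + c·sn_c(t))/(cn_c(t) + τ·sn_c(t)) satisfies f(τ,t) ≤ τ + c·t for all t ∈ [0,T]. -/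
/-- Case (B) of the barrier construction: if the denominator `cn_c + τ·sn_c`
is positive on `[0,T]`, then
`f(τ,t) = (τ·cn_c t + c·sn_c t)/(cn_c t + τ·sn_c t) ≤ τ + c·t` for all
`t ∈ [0,T]`.  Here `sn_c` is the unique solution of `sn_c'' = c·sn_c`,
`sn_c 0 = 0`, `sn_c' 0 = 1`, and `cn_c := sn_c'`. -/
theorem comparison_function_linear_bound (c τ T : ℝ) (hT : 0 < T)
    (sn cn : ℝ → ℝ)
    (hsn0 : sn 0 = 0) (hcn0 : cn 0 = 1)
    (hsn : ∀ s : ℝ, HasDerivAt sn (cn s) s)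
    (hcn : ∀ s : ℝ, HasDerivAt cn (c * sn s) s)
    (hden : ∀ t ∈ Set.Icc 0 T, 0 < cn t + τ * sn t) :
    ∀ t ∈ Set.Icc 0 T,
      (τ * cn t + c * sn t) / (cn t + τ * sn t) ≤ τ + c * t := by
  set N : ℝ → ℝ := fun t => τ * cn t + c * sn t with hN
  set D : ℝ → ℝ := fun t => cn t + τ * sn t with hD
  have hD' : ∀ s, HasDerivAt D (N s) s := by
    intro s
    have := (hcn s).add ((hsn s).const_mul τ)
    refine this.congr_deriv ?_
    simp [hN]; ring
  have hN' : ∀ s, HasDerivAt N (c * D s) s := by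
    intro s
    have := ((hcn s).const_mul τ).add ((hsn s).const_mul c)
    refine this.congr_deriv ?_
    simp [hD]; ring
  set g : ℝ → ℝ := fun t => τ + c * t - N t / D t with hg
  have hgderiv : ∀ x ∈ Set.Icc 0 T,
      HasDerivAt g ((N x / D x) ^ 2) x := by
    intro x hx
    have hDx : D x ≠ 0 := (hden x hx).ne'
    have hdiv : HasDerivAt (fun t => N t / D t)
        ((c * D x * D x - N x * N x) / D x ^ 2) x :=
      (hN' x).div (hD' x) hDx
    have hlin : HasDerivAt (fun t => τ + c * t) c x := by
      simpa using ((hasDerivAt_id x).const_mul c).const_add τ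
    have := hlin.sub hdiv
    refine this.congr_deriv ?_
    field_simp
    ring
  have hcont : ContinuousOn g (Set.Icc 0 T) := fun x hx =>
    ((hgderiv x hx).continuousAt).continuousWithinAt
  have hmono : MonotoneOn g (Set.Icc 0 T) := by
    apply monotoneOn_of_deriv_nonneg (convex_Icc 0 T) hcont
    · intro x hx
      have hx' : x ∈ Set.Icc 0 T := interior_subset hx
      exact (hgderiv x hx').differentiableAt.differentiableWithinAt
    · intro x hx
      have hx' : x ∈ Set.Icc 0 T := interior_subset hx
      rw [(hgderiv x hx').deriv]
      positivity
  intro t ht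
  have h0 : (0 : ℝ) ∈ Set.Icc 0 T := ⟨le_refl 0, hT.le⟩
  have := hmono h0 ht ht.1
  have hg0 : g 0 = 0 := by simp [hg, hN, hD, hsn0, hcn0]
  rw [hg0] at this
  simp only [hg, hN, hD] at this
  linarith
end
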